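/- For the layer with Ω(ρ) = 1 - (ρ-R)/(S-R) on ρ > R and height function h with H(x) = (x-R)/√((x-R)²+C²), the outgoing characteristic speed c₊ = Ω²/(L(1-H)) tends to 2(S-R)²/C² as ρ → S⁻. -/

import Mathlib

open Set Filter Topology

/-! With `y = x - R` and `s = √(y² + C²)`, the identity `(s - y)(s + y) = C²` rewrites
`c₊ = Ω² s / (s - y)` as `g (g + (ρ - R)) / C²`, where `g = Ω s = √((ρ - R)² + (Ω C)²)` no
longer involves the blow-up of `x` at `ρ = S`. This expression is continuous in `ρ`, and at
`ρ = S`, where `Ω = 0`, it equals `(S - R) (2 (S - R)) / C²`. -/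

lemma lt_sqrt_sq_add_sq (y : ℝ) {C : ℝ} (hC : C ≠ 0) : y < √(y ^ 2 + C ^ 2) :=
  Real.lt_sqrt_of_sq_lt (lt_add_of_pos_right _ (by positivity))

lemma inv_one_sub_div_sqrt_sq_add_sq (y : ℝ) {C : ℝ} (hC : C ≠ 0) :
    (1 - y / √(y ^ 2 + C ^ 2))⁻¹ = √(y ^ 2 + C ^ 2) * (√(y ^ 2 + C ^ 2) + y) / C ^ 2 := by
  have hys := lt_sqrt_sq_add_sq y hC
  have hs : 0 < √(y ^ 2 + C ^ 2) := Real.sqrt_pos.mpr (by positivity)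
  have hs2 : √(y ^ 2 + C ^ 2) ^ 2 = y ^ 2 + C ^ 2 := Real.sq_sqrt (by positivity)
  rw [one_sub_div hs.ne', inv_div, div_eq_div_iff (sub_pos.mpr hys).ne' (by positivity)]
  linear_combination -√(y ^ 2 + C ^ 2) * hs2

lemma mul_sqrt_div_sq_add_sq {Ω : ℝ} (hΩ : 0 < Ω) (u C : ℝ) :
    Ω * √((u / Ω) ^ 2 + C ^ 2) = √(u ^ 2 + (Ω * C) ^ 2) := by
  rw [← Real.sqrt_sq hΩ.le, ← Real.sqrt_mul (sq_nonneg Ω), Real.sqrt_sq hΩ.le]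
  congr 1
  field_simp

lemma sq_div_one_sub_div_sqrt_sq_add_sq {Ω : ℝ} (hΩ : 0 < Ω) (u : ℝ) {C : ℝ} (hC : C ≠ 0) :
    Ω ^ 2 / (1 - (u / Ω) / √((u / Ω) ^ 2 + C ^ 2)) =
      √(u ^ 2 + (Ω * C) ^ 2) * (√(u ^ 2 + (Ω * C) ^ 2) + u) / C ^ 2 := by
  rw [div_eq_mul_inv, inv_one_sub_div_sqrt_sq_add_sq _ hC, ← mul_sqrt_div_sq_add_sq hΩ u C]
  field_simp

theorem layer_outgoing_speed_limit_general
    (R S C : ℝ) (hRS : R < S) (hC : 0 < C)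
    (Ω x H c : ℝ → ℝ)
    (hΩ : ∀ ρ, Ω ρ = 1 - (ρ - R) / (S - R))
    (hx : ∀ ρ, x ρ = R + (ρ - R) / Ω ρ)
    (hH : ∀ ρ, H ρ = (x ρ - R) / Real.sqrt ((x ρ - R) ^ 2 + C ^ 2))
    (hc : ∀ ρ, c ρ = (Ω ρ) ^ 2 / (1 * (1 - H ρ))) :
    Tendsto c (nhdsWithin S (Iio S)) (nhds (2 * (S - R) ^ 2 / C ^ 2)) := by
  have hSR : 0 < S - R := sub_pos.mpr hRS
  set g : ℝ → ℝ := fun ρ => √((ρ - R) ^ 2 + (Ω ρ * C) ^ 2)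
  have hΩ_cont : Continuous Ω := by rw [funext hΩ]; fun_prop
  have hg_S : g S = S - R := by simp [g, hΩ, hSR.ne', Real.sqrt_sq hSR.le]
  have h_lim : Tendsto (fun ρ => g ρ * (g ρ + (ρ - R)) / C ^ 2) (𝓝[<] S)
      (𝓝 (2 * (S - R) ^ 2 / C ^ 2)) := by
    have h_cont : Continuous fun ρ => g ρ * (g ρ + (ρ - R)) / C ^ 2 := by fun_prop
    convert h_cont.continuousWithinAt.tendsto using 2
    rw [hg_S]
    ring
  refine h_lim.congr' (eventually_nhdsWithin_of_forall fun ρ (hρ : ρ < S) => ?_)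
  have hΩ_pos : 0 < Ω ρ := by
    rw [hΩ, one_sub_div hSR.ne']
    exact div_pos (by linarith) hSR
  rw [hc, hH, hx, one_mul, add_sub_cancel_left,
    sq_div_one_sub_div_sqrt_sq_add_sq hΩ_pos _ hC.ne']

/-- For the layer with Ω(ρ) = 1 - (ρ-R)/(S-R) on (R,S), L = 1,
x(ρ) = R + (ρ-R)/Ω(ρ) and boost function H = (x-R)/√((x-R)²+C²), the outgoing
characteristic speed c₊ = Ω²/(L(1-H)) tends to 2(S-R)²/C² as ρ → S⁻. -/
theorem layer_outgoing_speed_limit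
    (R S C : ℝ) (hR : 0 < R) (hRS : R < S) (hC : 0 < C)
    (Ω x H c : ℝ → ℝ)
    (hΩ : ∀ ρ, Ω ρ = 1 - (ρ - R) / (S - R))
    (hx : ∀ ρ, x ρ = R + (ρ - R) / Ω ρ)
    (hH : ∀ ρ, H ρ = (x ρ - R) / Real.sqrt ((x ρ - R) ^ 2 + C ^ 2))
    (hc : ∀ ρ, c ρ = (Ω ρ) ^ 2 / (1 * (1 - H ρ))) :
    Tendsto c (nhdsWithin S (Iio S)) (nhds (2 * (S - R) ^ 2 / C ^ 2)) :=
  layer_outgoing_speed_limit_general R S C hRS hC Ω x H c hΩ hx hH hc
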